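/- Let g ∈ L²(ℝ³) and consider the integral system on C⁰(ℝ, L²(ℝ³) ⊕ L²(ℝ³)): u_θ(x) = u₀(x) exp(-i ∫₀^θ (A_g)_τ(x) dτ), α_θ(k) = α₀(k) - i g(k) ∫₀^θ F(|u_τ|²)(k) dτ, where (A_g)_τ(x) = ∫ (g(k) \overline{α_τ}(k) e^{-ik·x} + \overline{g}(k) α_τ(k) e^{ik·x}) dk and F(|u|²)(k) = ∫ e^{-ik·x} |u(x)|² dx. Then any solution with given initial data (u₀, α₀) ∈ L² ⊕ L² is unique: if (u_θ, α_θ) and (v_θ, β_θ) are two continuous solutions with the same initial data, then they coincide for all θ ∈ ℝ. -/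

import Mathlib

open MeasureTheory Complex

noncomputable section

local notation "ℝ³" => EuclideanSpace ℝ (Fin 3)

/-- The field `A_g(x)` associated to `g` and `α`. -/
def Afun (g α : ℝ³ → ℂ) (x : ℝ³) : ℂ :=
  ∫ k : ℝ³, g k * (starRingEnd ℂ) (α k) * Complex.exp (-Complex.I * ((inner ℝ k x : ℝ) : ℂ))
    + (starRingEnd ℂ) (g k) * α k * Complex.exp (Complex.I * ((inner ℝ k x : ℝ) : ℂ))

/-- `F(|u|²)(k) = ∫ e^{-ik·x} |u(x)|² dx`. -/
def Ffun (u : ℝ³ → ℂ) (k : ℝ³) : ℂ :=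
  ∫ x : ℝ³, Complex.exp (-Complex.I * ((inner ℝ k x : ℝ) : ℂ)) * ((‖u x‖ ^ 2 : ℝ) : ℂ)

/-! Since `A_g` is real, the phase `exp (-i ∫₀^θ A_g)` is unimodular, so `|u_θ| = |u₀|` for every
solution. Hence `F(|u_τ|²)` does not depend on the solution, the equation for `α` gives `α = β`
pointwise, and then the equation for `u` gives `u = v` pointwise. -/

-- Conjugation swaps the two terms of the integrand.
theorem conj_Afun (g α : ℝ³ → ℂ) (x : ℝ³) : (starRingEnd ℂ) (Afun g α x) = Afun g α x := by
  rw [Afun, ← integral_conj]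
  congr 1
  funext k
  simp only [map_add, map_mul, ← Complex.exp_conj, Complex.conj_conj, map_neg, Complex.conj_I,
    Complex.conj_ofReal, neg_neg, neg_mul]
  ring

theorem norm_exp_neg_I_mul_intervalIntegral_Afun (g : ℝ³ → ℂ) (α : ℝ → ℝ³ → ℂ) (x : ℝ³)
    (a b : ℝ) : ‖Complex.exp (-Complex.I * ∫ τ in a..b, Afun g (α τ) x)‖ = 1 := by
  set z := ∫ τ in a..b, Afun g (α τ) x
  have hz_real : (starRingEnd ℂ) z = z := by
    simp only [z, ← intervalIntegral.intervalIntegral_conj, conj_Afun]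
  rw [← Complex.conj_eq_iff_re.mp hz_real, neg_mul, ← mul_neg, ← Complex.ofReal_neg,
    Complex.norm_exp_I_mul_ofReal]

theorem Ffun_congr_of_norm_eq {u v : ℝ³ → ℂ} (h : ∀ x, ‖u x‖ = ‖v x‖) : Ffun u = Ffun v := by
  funext k
  simp only [Ffun, h]

theorem stmt_5_general (g : ℝ³ → ℂ)
    (u v α β : ℝ → ℝ³ → ℂ)
    (hueq : ∀ θ x, u θ x
      = u 0 x * Complex.exp (-Complex.I * ∫ τ in (0 : ℝ)..θ, Afun g (α τ) x))
    (hαeq : ∀ θ k, α θ k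
      = α 0 k - Complex.I * g k * ∫ τ in (0 : ℝ)..θ, Ffun (u τ) k)
    (hveq : ∀ θ x, v θ x
      = v 0 x * Complex.exp (-Complex.I * ∫ τ in (0 : ℝ)..θ, Afun g (β τ) x))
    (hβeq : ∀ θ k, β θ k
      = β 0 k - Complex.I * g k * ∫ τ in (0 : ℝ)..θ, Ffun (v τ) k)
    (hinitu : ∀ x, u 0 x = v 0 x) (hinitα : ∀ k, α 0 k = β 0 k) :
    ∀ θ : ℝ, (∀ᵐ x : ℝ³ ∂volume, u θ x = v θ x) ∧ (∀ᵐ k : ℝ³ ∂volume, α θ k = β θ k) := by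
  have hF : ∀ τ, Ffun (u τ) = Ffun (v τ) := fun τ => Ffun_congr_of_norm_eq fun x => by
    rw [hueq, hveq, norm_mul, norm_mul, norm_exp_neg_I_mul_intervalIntegral_Afun,
      norm_exp_neg_I_mul_intervalIntegral_Afun, hinitu]
  have hαβ : α = β := by
    funext θ k
    rw [hαeq, hβeq, hinitα]
    simp only [hF]
  have huv : u = v := by
    funext θ x
    rw [hueq, hveq, hinitu, hαβ]
  subst hαβ huv
  exact fun θ => ⟨.of_forall fun _ => rfl, .of_forall fun _ => rfl⟩

/-- uniqueness of continuous `L² ⊕ L²`-valued solutions of the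
integral system `u_θ = u₀ e^{-i∫₀^θ (A_g)_τ dτ}`, `α_θ = α₀ - i g ∫₀^θ F(|u_τ|²) dτ`:
two solutions with the same initial data coincide for all `θ`. -/
theorem stmt_5 (g : ℝ³ → ℂ) (hg : MeasureTheory.MemLp g 2 volume)
    (u v α β : ℝ → ℝ³ → ℂ)
    (huL2 : ∀ θ, MeasureTheory.MemLp (u θ) 2 volume)
    (hvL2 : ∀ θ, MeasureTheory.MemLp (v θ) 2 volume)
    (hαL2 : ∀ θ, MeasureTheory.MemLp (α θ) 2 volume)
    (hβL2 : ∀ θ, MeasureTheory.MemLp (β θ) 2 volume)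
    (hucont : ∀ θ₀ : ℝ, Filter.Tendsto
      (fun θ => eLpNorm (fun x => u θ x - u θ₀ x) 2 volume) (nhds θ₀) (nhds 0))
    (hvcont : ∀ θ₀ : ℝ, Filter.Tendsto
      (fun θ => eLpNorm (fun x => v θ x - v θ₀ x) 2 volume) (nhds θ₀) (nhds 0))
    (hαcont : ∀ θ₀ : ℝ, Filter.Tendsto
      (fun θ => eLpNorm (fun k => α θ k - α θ₀ k) 2 volume) (nhds θ₀) (nhds 0))
    (hβcont : ∀ θ₀ : ℝ, Filter.Tendsto
      (fun θ => eLpNorm (fun k => β θ k - β θ₀ k) 2 volume) (nhds θ₀) (nhds 0))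
    (hueq : ∀ θ x, u θ x
      = u 0 x * Complex.exp (-Complex.I * ∫ τ in (0 : ℝ)..θ, Afun g (α τ) x))
    (hαeq : ∀ θ k, α θ k
      = α 0 k - Complex.I * g k * ∫ τ in (0 : ℝ)..θ, Ffun (u τ) k)
    (hveq : ∀ θ x, v θ x
      = v 0 x * Complex.exp (-Complex.I * ∫ τ in (0 : ℝ)..θ, Afun g (β τ) x))
    (hβeq : ∀ θ k, β θ k
      = β 0 k - Complex.I * g k * ∫ τ in (0 : ℝ)..θ, Ffun (v τ) k)
    (hinitu : ∀ x, u 0 x = v 0 x) (hinitα : ∀ k, α 0 k = β 0 k) :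
    ∀ θ : ℝ, (∀ᵐ x : ℝ³ ∂volume, u θ x = v θ x) ∧ (∀ᵐ k : ℝ³ ∂volume, α θ k = β θ k) :=
  stmt_5_general g u v α β hueq hαeq hveq hβeq hinitu hinitα
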